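/- arXiv:2405.11291 — 2 statements merged into one kernel-verified Lean document; each statement's English description precedes it below -/
import Mathlib

section
/- Assume ∫_{(0,1]} z^{α/d} λ(dz) < ∞. Then the function r ↦ τ̄(r) is continuous and nonincreasing on (0,∞), satisfies liminf_{r→∞} r^{α/d} τ̄(r) > 0, and is of extended regular variation at infinity. -/
open MeasureTheory Set Filter Topology
open scoped ENNReal NNReal

/-!
Integrating out the time variable gives `τ̄(r) = ∫_{(0,∞)} min(t, (z/r)^q) λ(dz)` with `q = α/d`.
The small-jump moment and `λ((1,∞)) < ∞` make this finite, and dominated convergence makes it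
continuous. For `c ≥ 1`, `min(t, c^{-q} x) ≥ c^{-q} min(t, x)` gives `τ̄(cr) ≥ c^{-q} τ̄(r)`; with
monotonicity this is extended regular variation with `δ₁ = q`, `δ₂ = 0`, and at `r = 1` it gives
`r^q τ̄(r) ≥ τ̄(1) > 0` for `r ≥ 1`.
-/

/-- `tauBar d α t lam r = τ̄(r)`, where
`τ(B) = (Leb ⊗ λ)({(s,z) ∈ (0,t] × (0,∞) : z·s^{-d/α} ∈ B})` and `τ̄(r) = τ((r,∞))`. -/
noncomputable def tauBar (d : ℕ) (α t : ℝ) (lam : MeasureTheory.Measure ℝ) (r : ℝ) : ℝ≥0∞ :=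
  ((MeasureTheory.volume.restrict (Set.Ioc (0:ℝ) t)).prod (lam.restrict (Set.Ioi (0:ℝ))))
    {p : ℝ × ℝ | r < p.2 * p.1 ^ (-((d : ℝ) / α))}

/-- `f : (0,∞) → (0,∞)` is of extended regular variation at infinity: there are `δ₁, δ₂ ≥ 0`
such that for every `c ≥ 1`,
`c^{-δ₁} ≤ liminf_{s→∞} f(cs)/f(s) ≤ limsup_{s→∞} f(cs)/f(s) ≤ c^{δ₂}`. -/
def ExtendedRegularVariation (f : ℝ → ℝ) : Prop :=
  ∃ δ₁ δ₂ : ℝ, 0 ≤ δ₁ ∧ 0 ≤ δ₂ ∧ ∀ c : ℝ, 1 ≤ c →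
    c ^ (-δ₁) ≤ Filter.liminf (fun s => f (c * s) / f s) Filter.atTop ∧
    Filter.liminf (fun s => f (c * s) / f s) Filter.atTop ≤
      Filter.limsup (fun s => f (c * s) / f s) Filter.atTop ∧
    Filter.limsup (fun s => f (c * s) / f s) Filter.atTop ≤ c ^ δ₂

theorem ExtendedRegularVariation.of_antitoneOn {f : ℝ → ℝ} {δ : ℝ} (hδ : 0 ≤ δ)
    (hanti : AntitoneOn f (Ioi 0)) (hpos : ∀ s, 0 < s → 0 < f s)
    (hscale : ∀ c, 1 ≤ c → ∀ s, 0 < s → c ^ (-δ) * f s ≤ f (c * s)) :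
    ExtendedRegularVariation f := by
  refine ⟨δ, 0, hδ, le_rfl, fun c hc => ?_⟩
  have hupper : ∀ᶠ s in atTop, f (c * s) / f s ≤ 1 := by
    filter_upwards [eventually_gt_atTop 0] with s hs
    refine (div_le_one (hpos s hs)).mpr (hanti hs ?_ (le_mul_of_one_le_left hs.le hc))
    exact mul_pos (zero_lt_one.trans_le hc) hs
  have hlower : ∀ᶠ s in atTop, c ^ (-δ) ≤ f (c * s) / f s := by
    filter_upwards [eventually_gt_atTop 0] with s hs
    exact (le_div_iff₀ (hpos s hs)).mpr (hscale c hc s hs)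
  have hbdd_above := isBoundedUnder_of_eventually_le hupper
  have hbdd_below := isBoundedUnder_of_eventually_ge hlower
  refine ⟨le_liminf_of_le hbdd_above.isCoboundedUnder_ge hlower,
    liminf_le_limsup hbdd_above hbdd_below, ?_⟩
  rw [Real.rpow_zero]
  exact limsup_le_of_le hbdd_below.isCoboundedUnder_le hupper

lemma lt_mul_rpow_neg_iff {p r s z : ℝ} (hp : 0 < p) (hr : 0 < r) (hs : 0 < s) (hz : 0 < z) :
    r < z * s ^ (-p) ↔ s < (z / r) ^ p⁻¹ := by
  rw [Real.lt_rpow_inv_iff_of_pos hs.le (div_nonneg hz.le hr.le) hp, lt_div_iff₀ hr,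
    Real.rpow_neg hs.le, ← div_eq_mul_inv, lt_div_iff₀ (Real.rpow_pos_of_pos hs p), mul_comm]

lemma measure_Ioi_ne_zero_of_measure_Iic_eq_zero {X : Type*} [MeasurableSpace X] [LinearOrder X]
    {μ : Measure X} {a : X}
    (hIic : μ (Iic a) = 0) (hμ : μ ≠ 0) : μ (Ioi a) ≠ 0 := fun hIoi =>
  hμ <| Measure.measure_univ_eq_zero.mp <| by
    rw [← Iic_union_Ioi (a := a)]
    exact measure_union_null hIic hIoi

lemma measure_Ioi_one_ne_top {μ : Measure ℝ}
    (h : ∫⁻ z in Ioi 0, ENNReal.ofReal (min 1 (z ^ 2)) ∂μ ≠ ∞) : μ (Ioi 1) ≠ ∞ := by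
  refine ne_top_of_le_ne_top h ?_
  calc μ (Ioi 1) = ∫⁻ z in Ioi 1, ENNReal.ofReal (min 1 (z ^ 2)) ∂μ := by
        rw [← setLIntegral_one]
        refine setLIntegral_congr_fun measurableSet_Ioi fun z (hz : 1 < z) => ?_
        rw [min_eq_left (one_le_pow₀ hz.le), ENNReal.ofReal_one]
    _ ≤ ∫⁻ z in Ioi 0, ENNReal.ofReal (min 1 (z ^ 2)) ∂μ :=
        lintegral_mono_set (Ioi_subset_Ioi zero_le_one)

noncomputable def truncPowIntegral (μ : Measure ℝ) (t q r : ℝ) : ℝ≥0∞ :=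
  ∫⁻ z in Ioi 0, ENNReal.ofReal (min t ((z / r) ^ q)) ∂μ

section truncPowIntegral

variable {μ : Measure ℝ} {t q : ℝ}

lemma truncPowIntegral_ne_top (hμ : μ (Ioi 1) ≠ ∞)
    (hsmall : ∫⁻ z in Ioc 0 1, ENNReal.ofReal (z ^ q) ∂μ ≠ ∞) {r : ℝ} (hr : 0 < r) :
    truncPowIntegral μ t q r ≠ ∞ := by
  rw [truncPowIntegral, ← Ioc_union_Ioi_eq_Ioi zero_le_one]
  refine ne_top_of_le_ne_top ?_ (lintegral_union_le _ _ _)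
  have hsmall_r : ∫⁻ z in Ioc 0 1, ENNReal.ofReal (min t ((z / r) ^ q)) ∂μ
      ≤ ENNReal.ofReal ((r ^ q)⁻¹) * ∫⁻ z in Ioc 0 1, ENNReal.ofReal (z ^ q) ∂μ := by
    rw [← lintegral_const_mul' _ _ ENNReal.ofReal_ne_top]
    refine setLIntegral_mono (by fun_prop) fun z hz => ?_
    rw [← ENNReal.ofReal_mul (by positivity), ← div_eq_inv_mul, ← Real.div_rpow hz.1.le hr.le]
    exact ENNReal.ofReal_le_ofReal (min_le_right _ _)
  have hlarge : ∫⁻ z in Ioi 1, ENNReal.ofReal (min t ((z / r) ^ q)) ∂μ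
      ≤ ENNReal.ofReal t * μ (Ioi 1) := by
    rw [← setLIntegral_const]
    exact setLIntegral_mono (by fun_prop) fun z _ => ENNReal.ofReal_le_ofReal (min_le_left _ _)
  exact ENNReal.add_ne_top.mpr
    ⟨ne_top_of_le_ne_top (ENNReal.mul_ne_top ENNReal.ofReal_ne_top hsmall) hsmall_r,
      ne_top_of_le_ne_top (ENNReal.mul_ne_top ENNReal.ofReal_ne_top hμ) hlarge⟩

lemma truncPowIntegral_pos (ht : 0 < t) (hμ : μ (Ioi 0) ≠ 0) {r : ℝ} (hr : 0 < r) :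
    0 < truncPowIntegral μ t q r := by
  rw [truncPowIntegral, setLIntegral_pos_iff (by fun_prop)]
  refine lt_of_lt_of_le (pos_iff_ne_zero.mpr hμ) (measure_mono fun z (hz : 0 < z) => ⟨?_, hz⟩)
  exact (ENNReal.ofReal_pos.mpr (lt_min ht (Real.rpow_pos_of_pos (div_pos hz hr) q))).ne'

lemma rpow_neg_mul_truncPowIntegral_le (ht : 0 ≤ t) (hq : 0 ≤ q) {c s : ℝ} (hc : 1 ≤ c)
    (hs : 0 < s) :
    ENNReal.ofReal (c ^ (-q)) * truncPowIntegral μ t q s ≤ truncPowIntegral μ t q (c * s) := by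
  have hc0 : 0 < c := zero_lt_one.trans_le hc
  rw [truncPowIntegral, truncPowIntegral, ← lintegral_const_mul' _ _ ENNReal.ofReal_ne_top]
  refine setLIntegral_mono (by fun_prop) fun z (hz : 0 < z) => ?_
  have hscale : (z / (c * s)) ^ q = c ^ (-q) * (z / s) ^ q := by
    rw [show z / (c * s) = c⁻¹ * (z / s) by field_simp, Real.mul_rpow (by positivity)
      (by positivity), Real.inv_rpow hc0.le, Real.rpow_neg hc0.le]
  rw [← ENNReal.ofReal_mul (by positivity), mul_min_of_nonneg _ _ (by positivity), hscale]
  refine ENNReal.ofReal_le_ofReal (min_le_min_right _ ?_)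
  exact mul_le_of_le_one_left ht (Real.rpow_le_one_of_one_le_of_nonpos hc (neg_nonpos.mpr hq))

lemma truncPowIntegral_one_le_rpow_mul (ht : 0 ≤ t) (hq : 0 ≤ q) {r : ℝ} (hr : 1 ≤ r) :
    truncPowIntegral μ t q 1 ≤ ENNReal.ofReal (r ^ q) * truncPowIntegral μ t q r := by
  have hr0 : 0 < r := zero_lt_one.trans_le hr
  calc truncPowIntegral μ t q 1
      = ENNReal.ofReal (r ^ q) * (ENNReal.ofReal (r ^ (-q)) * truncPowIntegral μ t q 1) := by
        rw [← mul_assoc, ← ENNReal.ofReal_mul (by positivity), ← Real.rpow_add hr0,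
          add_neg_cancel, Real.rpow_zero, ENNReal.ofReal_one, one_mul]
    _ ≤ ENNReal.ofReal (r ^ q) * truncPowIntegral μ t q (r * 1) := by
        gcongr
        exact rpow_neg_mul_truncPowIntegral_le ht hq hr one_pos
    _ = ENNReal.ofReal (r ^ q) * truncPowIntegral μ t q r := by rw [mul_one]

lemma continuousOn_truncPowIntegral (hq : 0 ≤ q)
    (hfin : ∀ r, 0 < r → truncPowIntegral μ t q r ≠ ∞) :
    ContinuousOn (truncPowIntegral μ t q) (Ioi 0) := by
  intro r₀ (hr₀ : 0 < r₀)
  refine ContinuousAt.continuousWithinAt <| tendsto_lintegral_filter_of_dominated_convergence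
    (F := fun r z => ENNReal.ofReal (min t ((z / r) ^ q))) _ (.of_forall fun r => by fun_prop)
    ?_ (hfin (r₀ / 2) (half_pos hr₀)) ?_
  · filter_upwards [Ioi_mem_nhds (half_lt_self hr₀)] with r (hr : r₀ / 2 < r)
    filter_upwards [ae_restrict_mem measurableSet_Ioi] with z (hz : 0 < z)
    refine ENNReal.ofReal_le_ofReal (min_le_min_left _ ?_)
    have hr0 : 0 < r := (half_pos hr₀).trans hr
    exact Real.rpow_le_rpow (div_nonneg hz.le hr0.le)
      (div_le_div_of_nonneg_left hz.le (half_pos hr₀) hr.le) hq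
  · refine .of_forall fun z => ?_
    refine (ENNReal.continuous_ofReal.tendsto _).comp ?_
    exact continuousAt_const.min ((continuousAt_const.div continuousAt_id hr₀.ne').rpow_const
      (Or.inr hq))

end truncPowIntegral

lemma tauBar_antitone (d : ℕ) (α t : ℝ) (lam : Measure ℝ) : Antitone (tauBar d α t lam) :=
  fun _ _ h => measure_mono fun _ hp => h.trans_lt hp

lemma tauBar_eq_truncPowIntegral {d : ℕ} {α : ℝ} (hα : 0 < α) (hd : 0 < d) (t : ℝ)
    (lam : Measure ℝ) [SFinite lam] {r : ℝ} (hr : 0 < r) :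
    tauBar d α t lam r = truncPowIntegral lam t (α / d) r := by
  have hmeas : MeasurableSet {p : ℝ × ℝ | r < p.2 * p.1 ^ (-((d : ℝ) / α))} :=
    measurableSet_lt measurable_const (by fun_prop)
  rw [tauBar, Measure.prod_apply_symm hmeas, truncPowIntegral]
  refine setLIntegral_congr_fun measurableSet_Ioi fun z (hz : 0 < z) => ?_
  have hiff : ∀ s, 0 < s → (r < z * s ^ (-((d : ℝ) / α)) ↔ s < (z / r) ^ (α / d)) :=
    fun s hs => by rw [lt_mul_rpow_neg_iff (by positivity) hr hs hz, inv_div]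
  set m := min t ((z / r) ^ (α / d))
  have hIoo_sub_slice :
      Ioo 0 m ⊆ (fun s => (s, z)) ⁻¹' {p : ℝ × ℝ | r < p.2 * p.1 ^ (-((d : ℝ) / α))} ∩ Ioc 0 t :=
    fun s ⟨hs, hsm⟩ =>
      ⟨(hiff s hs).2 (hsm.trans_le (min_le_right _ _)), hs, (hsm.trans_le (min_le_left _ _)).le⟩
  have hslice_sub_Ioc : (fun s => (s, z)) ⁻¹' {p : ℝ × ℝ | r < p.2 * p.1 ^ (-((d : ℝ) / α))}
      ∩ Ioc 0 t ⊆ Ioc 0 m := fun s ⟨hlt, hs, hst⟩ =>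
    ⟨hs, le_min hst ((hiff s hs).1 hlt).le⟩
  rw [Measure.restrict_apply (measurable_prodMk_right hmeas)]
  refine le_antisymm ?_ ?_
  · simpa using measure_mono (μ := volume) hslice_sub_Ioc
  · simpa using measure_mono (μ := volume) hIoo_sub_slice

theorem stmt1 (d : ℕ) (hd : 1 ≤ d) (α : ℝ) (hα : α ∈ Set.Ioo (0:ℝ) 2) (t : ℝ) (ht : 0 < t)
    (lam : MeasureTheory.Measure ℝ) [SigmaFinite lam]
    (hlam0 : lam (Set.Iic 0) = 0) (hlam_ne : lam ≠ 0)
    (hmom : ∫⁻ z in Set.Ioi (0:ℝ), ENNReal.ofReal (min 1 (z ^ 2)) ∂lam ≠ ⊤)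
    (hsmall : ∫⁻ z in Set.Ioc (0:ℝ) 1, ENNReal.ofReal (z ^ (α / (d:ℝ))) ∂lam ≠ ⊤) :
    ContinuousOn (fun r => (tauBar d α t lam r).toReal) (Set.Ioi 0) ∧
    AntitoneOn (fun r => (tauBar d α t lam r).toReal) (Set.Ioi 0) ∧
    0 < Filter.liminf
        (fun r : ℝ => ENNReal.ofReal (r ^ (α / (d:ℝ))) * tauBar d α t lam r) Filter.atTop ∧
    ExtendedRegularVariation (fun r => (tauBar d α t lam r).toReal) := by
  set F := truncPowIntegral lam t (α / d)
  have hq : 0 < α / (d : ℝ) := div_pos hα.1 (by exact_mod_cast hd)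
  have hτ : ∀ r, 0 < r → tauBar d α t lam r = F r :=
    fun r => tauBar_eq_truncPowIntegral hα.1 hd t lam
  have hfin : ∀ r, 0 < r → F r ≠ ∞ :=
    fun r => truncPowIntegral_ne_top (measure_Ioi_one_ne_top hmom) hsmall
  have hpos : ∀ r, 0 < r → 0 < F r :=
    fun r => truncPowIntegral_pos ht (measure_Ioi_ne_zero_of_measure_Iic_eq_zero hlam0 hlam_ne)
  have hanti : AntitoneOn (fun r => (tauBar d α t lam r).toReal) (Ioi 0) := fun a ha _ _ hab =>
    ENNReal.toReal_mono (hτ a ha ▸ hfin a ha) (tauBar_antitone d α t lam hab)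
  refine ⟨?_, hanti, ?_, ?_⟩
  · refine (ENNReal.continuousOn_toReal.comp (continuousOn_truncPowIntegral hq.le hfin)
      hfin).congr fun r hr => ?_
    exact congrArg ENNReal.toReal (hτ r hr)
  · refine (hpos 1 one_pos).trans_le (le_liminf_of_le (by isBoundedDefault) ?_)
    filter_upwards [eventually_ge_atTop 1] with r hr
    rw [hτ r (zero_lt_one.trans_le hr)]
    exact truncPowIntegral_one_le_rpow_mul ht.le hq.le hr
  · refine ExtendedRegularVariation.of_antitoneOn hq.le hanti (fun s hs => ?_) fun c hc s hs => ?_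
    · rw [hτ s hs]
      exact ENNReal.toReal_pos (hpos s hs).ne' (hfin s hs)
    · have hcs : 0 < c * s := mul_pos (zero_lt_one.trans_le hc) hs
      have h := ENNReal.toReal_mono (hfin _ hcs)
        (rpow_neg_mul_truncPowIntegral_le ht.le hq.le hc hs)
      rw [ENNReal.toReal_mul, ENNReal.toReal_ofReal (by positivity)] at h
      rwa [hτ s hs, hτ _ hcs]
end

section
/- The integral ∫_{(0,t]} ∫_{ℝ^d} ∫_{(0,∞)} min(1, p_s(y)·z) λ(dz) dy ds is finite if and only if both ∫_{(0,1]} z λ(dz) < ∞ and ∫_{(1,∞)} z^{d/(d+α)} λ(dz) < ∞. -/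
open MeasureTheory Set Filter Topology
open scoped ENNReal NNReal

/-! With `γ = d + α`, the tail condition and monotonicity squeeze `g(r)` between
`c·min(1, r^{-γ})` and `C·r^{-γ}`, so that `c·min(s^{-d/α}, s|y|^{-γ}) ≤ p_s(y) ≤ C·s|y|^{-γ}`.
By dilation, `∫ min(1, M|y|^{-γ}) dy = M^{d/γ} Φ` with `0 < Φ < ∞` because `γ > d`. After Tonelli
the `λ`-integrand `K(z) = ∫_{(0,t]} ∫ min(1, p_s(y) z) dy ds` is therefore comparable to `z^{d/γ}`
for `z ≥ 1`, and to `z` for `z ≤ 1`: from above because `∫ p_s = 1`, from below because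
`K(z) ≥ z K(1)`. -/

/-- The heat-kernel profile `p_s(y) = s^{-d/α} g(|y|/s^{1/α})`. -/
noncomputable def pker (d : ℕ) (α : ℝ) (g : ℝ → ℝ) (s : ℝ)
    (y : EuclideanSpace ℝ (Fin d)) : ℝ :=
  s ^ (-((d : ℝ) / α)) * g (‖y‖ / s ^ ((1 : ℝ) / α))

theorem lintegral_lt_top_iff_of_le_of_le {X : Type*} [MeasurableSpace X] {μ : Measure X}
    {f u : X → ℝ≥0∞} {a b : ℝ≥0∞} (ha : a ≠ 0) (hb : b ≠ ⊤)
    (hlow : ∀ᵐ x ∂μ, a * u x ≤ f x) (hup : ∀ᵐ x ∂μ, f x ≤ b * u x) :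
    ∫⁻ x, f x ∂μ < ⊤ ↔ ∫⁻ x, u x ∂μ < ⊤ := by
  constructor
  · intro hf
    have : a * ∫⁻ x, u x ∂μ < ⊤ :=
      ((lintegral_const_mul_le a u).trans (lintegral_mono_ae hlow)).trans_lt hf
    exact ENNReal.lt_top_of_mul_ne_top_right this.ne ha
  · intro hu
    calc ∫⁻ x, f x ∂μ ≤ ∫⁻ x, b * u x ∂μ := lintegral_mono_ae hup
      _ = b * ∫⁻ x, u x ∂μ := lintegral_const_mul' b u hb
      _ < ⊤ := ENNReal.mul_lt_top hb.lt_top hu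

theorem lintegral_ofReal_min_one_mul_le {X : Type*} [MeasurableSpace X] (μ : Measure X)
    (f : X → ℝ) {z : ℝ} (hz : 0 ≤ z) :
    ∫⁻ x, ENNReal.ofReal (min 1 (f x * z)) ∂μ ≤
      ENNReal.ofReal z * ∫⁻ x, ENNReal.ofReal (f x) ∂μ := by
  rw [← lintegral_const_mul' _ _ ENNReal.ofReal_ne_top]
  refine lintegral_mono fun x => ?_
  rw [← ENNReal.ofReal_mul hz, mul_comm z]
  exact ENNReal.ofReal_le_ofReal (min_le_right _ _)

theorem lintegral_lintegral_lintegral_swap {X Y Z : Type*} [MeasurableSpace X]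
    [MeasurableSpace Y] [MeasurableSpace Z] {μ : Measure X} {ν : Measure Y} {ρ : Measure Z}
    [SFinite μ] [SFinite ν] [SFinite ρ] {F : X → Y → Z → ℝ≥0∞}
    (hF : Measurable fun p : X × Y × Z => F p.1 p.2.1 p.2.2) :
    ∫⁻ x, ∫⁻ y, ∫⁻ z, F x y z ∂ρ ∂ν ∂μ = ∫⁻ z, ∫⁻ x, ∫⁻ y, F x y z ∂ν ∂μ ∂ρ := by
  have hyz : ∀ x, ∫⁻ y, ∫⁻ z, F x y z ∂ρ ∂ν = ∫⁻ z, ∫⁻ y, F x y z ∂ν ∂ρ := fun x =>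
    lintegral_lintegral_swap (hF.comp measurable_prodMk_left).aemeasurable
  simp_rw [hyz]
  refine lintegral_lintegral_swap (Measurable.aemeasurable ?_)
  exact Measurable.lintegral_prod_right' (f := fun p : (X × Z) × Y => F p.1.1 p.2 p.1.2)
    (hF.comp (f := fun p : (X × Z) × Y => (p.1.1, p.2, p.1.2)) (by fun_prop))

theorem min_one_rpow_neg_le {r γ : ℝ} (hr : 0 ≤ r) (hγ : 0 ≤ γ) :
    min 1 (r ^ (-γ)) ≤ 2 ^ γ * (1 + r) ^ (-γ) := by
  have h1r : 0 < (1 + r) ^ γ := by positivity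
  rw [Real.rpow_neg (by positivity : (0:ℝ) ≤ 1 + r), ← div_eq_mul_inv, le_div_iff₀ h1r]
  rcases le_total r 1 with hr1 | hr1
  · calc min 1 (r ^ (-γ)) * (1 + r) ^ γ ≤ 1 * 2 ^ γ := by
          gcongr
          · exact min_le_left _ _
          · linarith
      _ = 2 ^ γ := one_mul _
  · have hr0 : 0 < r := by linarith
    calc min 1 (r ^ (-γ)) * (1 + r) ^ γ ≤ r ^ (-γ) * (2 * r) ^ γ := by
          gcongr
          · exact min_le_right _ _
          · linarith
      _ = 2 ^ γ := by
          rw [Real.mul_rpow zero_le_two hr0.le, Real.rpow_neg hr0.le]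
          field_simp

theorem lintegral_min_one_norm_rpow_neg_ne_zero {E : Type*} [NormedAddCommGroup E] [Nontrivial E]
    [MeasurableSpace E] [BorelSpace E] (μ : Measure E) [μ.IsOpenPosMeasure] (γ : ℝ) :
    ∫⁻ y, ENNReal.ofReal (min 1 (‖y‖ ^ (-γ))) ∂μ ≠ 0 := by
  refine ((lintegral_pos_iff_support (by fun_prop)).2 ?_).ne'
  refine (isOpen_compl_singleton (x := (0 : E))).measure_pos μ ?_ |>.trans_le (measure_mono ?_)
  · exact exists_ne 0
  · intro y hy
    have hy0 : 0 < ‖y‖ := norm_pos_iff.2 hy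
    simpa [Function.mem_support] using lt_min one_pos (Real.rpow_pos_of_pos hy0 _)

section AddHaar

variable {E : Type*} [NormedAddCommGroup E] [NormedSpace ℝ E] [MeasurableSpace E] [BorelSpace E]
  [FiniteDimensional ℝ E] (μ : Measure E) [μ.IsAddHaarMeasure] {γ : ℝ}

theorem lintegral_min_one_norm_rpow_neg_lt_top (hγ : (Module.finrank ℝ E : ℝ) < γ) :
    ∫⁻ y, ENNReal.ofReal (min 1 (‖y‖ ^ (-γ))) ∂μ < ⊤ := by
  have hγ0 : 0 ≤ γ := (Nat.cast_nonneg _).trans hγ.le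
  calc ∫⁻ y, ENNReal.ofReal (min 1 (‖y‖ ^ (-γ))) ∂μ
      ≤ ∫⁻ y, ENNReal.ofReal (2 ^ γ) * ENNReal.ofReal ((1 + ‖y‖) ^ (-γ)) ∂μ := by
        refine lintegral_mono fun y => ?_
        rw [← ENNReal.ofReal_mul (by positivity)]
        exact ENNReal.ofReal_le_ofReal (min_one_rpow_neg_le (norm_nonneg y) hγ0)
    _ = ENNReal.ofReal (2 ^ γ) * ∫⁻ y, ENNReal.ofReal ((1 + ‖y‖) ^ (-γ)) ∂μ :=
        lintegral_const_mul' _ _ ENNReal.ofReal_ne_top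
    _ < ⊤ := ENNReal.mul_lt_top ENNReal.ofReal_lt_top (finite_integral_one_add_norm hγ)

theorem lintegral_comp_smul_of_pos (f : E → ℝ≥0∞) {R : ℝ} (hR : 0 < R) :
    ∫⁻ x, f (R • x) ∂μ = ENNReal.ofReal ((R ^ Module.finrank ℝ E)⁻¹) * ∫⁻ x, f x ∂μ := by
  let e : E ≃ᵐ E := (Homeomorph.smul (Units.mk0 R hR.ne')).toMeasurableEquiv
  calc ∫⁻ x, f (R • x) ∂μ = ∫⁻ y, f y ∂μ.map e := (lintegral_map_equiv f e).symm
    _ = _ := by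
      rw [show (e : E → E) = fun x => R • x from rfl, Measure.map_addHaar_smul μ hR.ne',
        lintegral_smul_measure, abs_of_pos (by positivity), smul_eq_mul]

theorem lintegral_min_one_mul_norm_rpow_neg {M : ℝ} (hγ : 0 < γ) (hM : 0 < M) :
    ∫⁻ y, ENNReal.ofReal (min 1 (M * ‖y‖ ^ (-γ))) ∂μ =
      ENNReal.ofReal (M ^ ((Module.finrank ℝ E : ℝ) / γ)) *
        ∫⁻ y, ENNReal.ofReal (min 1 (‖y‖ ^ (-γ))) ∂μ := by
  set R := M ^ (1 / γ)
  have hR : 0 < R := by positivity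
  have hRM : R ^ (-γ) = M⁻¹ := by
    rw [← Real.rpow_mul hM.le, one_div, inv_mul_eq_div, neg_div, div_self hγ.ne',
      Real.rpow_neg_one]
  have hRn : R ^ Module.finrank ℝ E = M ^ ((Module.finrank ℝ E : ℝ) / γ) := by
    rw [← Real.rpow_natCast, ← Real.rpow_mul hM.le, one_div, inv_mul_eq_div]
  have hdil : ∀ x : E, M * ‖R • x‖ ^ (-γ) = ‖x‖ ^ (-γ) := fun x => by
    rw [norm_smul, Real.norm_of_nonneg hR.le, Real.mul_rpow hR.le (norm_nonneg x), hRM,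
      ← mul_assoc, mul_inv_cancel₀ hM.ne', one_mul]
  have h := lintegral_comp_smul_of_pos μ (fun y => ENNReal.ofReal (min 1 (M * ‖y‖ ^ (-γ)))) hR
  simp only [hdil] at h
  rw [h, ← mul_assoc, ← ENNReal.ofReal_mul (by positivity), ← hRn,
    mul_inv_cancel₀ (by positivity), ENNReal.ofReal_one, one_mul]

end AddHaar

section Profile

variable {g : ℝ → ℝ} {γ c₀ : ℝ}

theorem exists_le_mul_rpow_neg_of_tendsto (hg : AntitoneOn g (Ici 0)) (hg0 : 0 < g 0)
    (hγ : 0 ≤ γ) (htail : Tendsto (fun r => r ^ γ * g r) atTop (𝓝 c₀)) :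
    ∃ C > 0, ∀ r > 0, g r ≤ C * r ^ (-γ) := by
  obtain ⟨R, hR⟩ := (htail.eventually (eventually_le_nhds
    ((le_abs_self c₀).trans_lt (lt_add_one |c₀|)))).exists_forall_of_atTop
  refine ⟨max (|c₀| + 1) (g 0 * R ^ γ), by positivity, fun r hr => ?_⟩
  rw [Real.rpow_neg hr.le, ← div_eq_mul_inv, le_div_iff₀ (by positivity), mul_comm]
  rcases le_or_gt R r with hRr | hrR
  · exact (hR r hRr).trans (le_max_left _ _)
  · calc r ^ γ * g r ≤ r ^ γ * g 0 := by gcongr; exact hg self_mem_Ici hr.le hr.le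
      _ ≤ R ^ γ * g 0 := by gcongr
      _ ≤ _ := (mul_comm _ _).le.trans (le_max_right _ _)

theorem exists_mul_min_one_rpow_neg_le_of_tendsto (hg : AntitoneOn g (Ici 0))
    (hg_pos : ∀ r, 0 ≤ r → 0 < g r) (hc₀ : 0 < c₀)
    (htail : Tendsto (fun r => r ^ γ * g r) atTop (𝓝 c₀)) :
    ∃ c > 0, ∀ r > 0, c * min 1 (r ^ (-γ)) ≤ g r := by
  obtain ⟨R, hR⟩ :=
    (htail.eventually (eventually_ge_nhds (half_lt_self hc₀))).exists_forall_of_atTop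
  set R₀ := max R 0
  have hR₀ : 0 ≤ R₀ := le_max_right _ _
  have hgR₀ := hg_pos R₀ hR₀
  refine ⟨min (g R₀) (c₀ / 2), lt_min hgR₀ (half_pos hc₀), fun r hr => ?_⟩
  rcases le_or_gt r R₀ with hrR | hRr
  · calc min (g R₀) (c₀ / 2) * min 1 (r ^ (-γ)) ≤ g R₀ * 1 :=
          mul_le_mul (min_le_left _ _) (min_le_left _ _) (by positivity) hgR₀.le
      _ ≤ g r := (mul_one _).le.trans (hg hr.le hR₀ hrR)
  · calc min (g R₀) (c₀ / 2) * min 1 (r ^ (-γ)) ≤ c₀ / 2 * r ^ (-γ) :=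
          mul_le_mul (min_le_right _ _) (min_le_right _ _) (by positivity) (half_pos hc₀).le
      _ ≤ g r := by
          rw [Real.rpow_neg hr.le, ← div_eq_mul_inv, div_le_iff₀ (by positivity), mul_comm]
          exact hR r ((le_max_left _ _).trans hRr.le)

end Profile

theorem rpow_neg_div_mul_div_rpow_rpow_neg_add {d α s r : ℝ} (hα : α ≠ 0) (hs : 0 < s)
    (hr : 0 ≤ r) : s ^ (-(d / α)) * (r / s ^ (1 / α)) ^ (-(d + α)) = s * r ^ (-(d + α)) := by
  rw [Real.div_rpow hr (by positivity), ← Real.rpow_mul hs.le,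
    show -(d / α) = 1 + 1 / α * -(d + α) by field_simp; ring, Real.rpow_add hs, Real.rpow_one]
  field_simp

section Kernel

variable {d : ℕ} {α : ℝ} {g : ℝ → ℝ} {s : ℝ} {y : EuclideanSpace ℝ (Fin d)}

theorem pker_le_mul_norm_rpow_neg {C : ℝ} (hα : 0 < α)
    (hC : ∀ r > 0, g r ≤ C * r ^ (-((d : ℝ) + α))) (hs : 0 < s) (hy : y ≠ 0) :
    pker d α g s y ≤ C * s * ‖y‖ ^ (-((d : ℝ) + α)) := by
  have hu : 0 < ‖y‖ / s ^ (1 / α) := div_pos (norm_pos_iff.2 hy) (by positivity)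
  calc pker d α g s y ≤ s ^ (-((d : ℝ) / α)) * (C * (‖y‖ / s ^ (1 / α)) ^ (-((d : ℝ) + α))) :=
        mul_le_mul_of_nonneg_left (hC _ hu) (by positivity)
    _ = C * s * ‖y‖ ^ (-((d : ℝ) + α)) := by
        rw [mul_left_comm, rpow_neg_div_mul_div_rpow_rpow_neg_add hα.ne' hs (norm_nonneg y),
          mul_assoc]

theorem mul_min_le_pker {c : ℝ} (hα : 0 < α)
    (hc : ∀ r > 0, c * min 1 (r ^ (-((d : ℝ) + α))) ≤ g r) (hs : 0 < s) (hy : y ≠ 0) :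
    c * min (s ^ (-((d : ℝ) / α))) (s * ‖y‖ ^ (-((d : ℝ) + α))) ≤ pker d α g s y := by
  have hu : 0 < ‖y‖ / s ^ (1 / α) := div_pos (norm_pos_iff.2 hy) (by positivity)
  calc c * min (s ^ (-((d : ℝ) / α))) (s * ‖y‖ ^ (-((d : ℝ) + α)))
      = s ^ (-((d : ℝ) / α)) * (c * min 1 ((‖y‖ / s ^ (1 / α)) ^ (-((d : ℝ) + α)))) := by
        rw [mul_left_comm (s ^ _) c, mul_min_of_nonneg 1 _ (by positivity), mul_one,
          rpow_neg_div_mul_div_rpow_rpow_neg_add hα.ne' hs (norm_nonneg y)]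
    _ ≤ pker d α g s y := mul_le_mul_of_nonneg_left (hc _ hu) (by positivity)

theorem lintegral_min_one_pker_mul_le_rpow [NeZero d] {C z : ℝ} (hα : 0 < α) (hC0 : 0 < C)
    (hC : ∀ r > 0, g r ≤ C * r ^ (-((d : ℝ) + α))) (hs : 0 < s) (hz : 0 < z) :
    ∫⁻ y, ENNReal.ofReal (min 1 (pker d α g s y * z)) ≤
      ENNReal.ofReal ((C * s * z) ^ ((d : ℝ) / (d + α))) *
        ∫⁻ y : EuclideanSpace ℝ (Fin d), ENNReal.ofReal (min 1 (‖y‖ ^ (-((d : ℝ) + α)))) := by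
  have hΦ := lintegral_min_one_mul_norm_rpow_neg (E := EuclideanSpace ℝ (Fin d)) volume
    (by positivity : 0 < (d : ℝ) + α) (by positivity : 0 < C * s * z)
  rw [finrank_euclideanSpace_fin] at hΦ
  rw [← hΦ]
  refine lintegral_mono_ae ?_
  filter_upwards [volume.ae_ne 0] with y hy
  refine ENNReal.ofReal_le_ofReal (min_le_min_left _ ?_)
  calc pker d α g s y * z ≤ C * s * ‖y‖ ^ (-((d : ℝ) + α)) * z :=
        mul_le_mul_of_nonneg_right (pker_le_mul_norm_rpow_neg hα hC hs hy) hz.le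
    _ = C * s * z * ‖y‖ ^ (-((d : ℝ) + α)) := by ring

theorem rpow_mul_le_lintegral_min_one_pker_mul [NeZero d] {c z : ℝ} (hα : 0 < α) (hc0 : 0 < c)
    (hc : ∀ r > 0, c * min 1 (r ^ (-((d : ℝ) + α))) ≤ g r) (hs : 0 < s)
    (hsc : s ≤ c ^ (α / d)) (hz : 1 ≤ z) :
    ENNReal.ofReal ((c * s * z) ^ ((d : ℝ) / (d + α))) *
        ∫⁻ y : EuclideanSpace ℝ (Fin d), ENNReal.ofReal (min 1 (‖y‖ ^ (-((d : ℝ) + α)))) ≤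
      ∫⁻ y, ENNReal.ofReal (min 1 (pker d α g s y * z)) := by
  have hz0 : 0 < z := one_pos.trans_le hz
  have hsd : s ^ ((d : ℝ) / α) ≤ c := by
    calc s ^ ((d : ℝ) / α) ≤ (c ^ (α / d)) ^ ((d : ℝ) / α) := by gcongr
      _ = c := by
        rw [← Real.rpow_mul hc0.le, div_mul_div_comm, mul_comm α,
          div_self (mul_ne_zero (Nat.cast_ne_zero.2 (NeZero.ne d)) hα.ne'), Real.rpow_one]
  have hczs : 1 ≤ c * z * s ^ (-((d : ℝ) / α)) := by
    rw [Real.rpow_neg hs.le]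
    calc (1 : ℝ) = c * 1 * c⁻¹ := by field_simp
      _ ≤ c * z * (s ^ ((d : ℝ) / α))⁻¹ := by gcongr
  have hΦ := lintegral_min_one_mul_norm_rpow_neg (E := EuclideanSpace ℝ (Fin d)) volume
    (by positivity : 0 < (d : ℝ) + α) (by positivity : 0 < c * s * z)
  rw [finrank_euclideanSpace_fin] at hΦ
  rw [← hΦ]
  refine lintegral_mono_ae ?_
  filter_upwards [volume.ae_ne 0] with y hy
  refine ENNReal.ofReal_le_ofReal (le_min (min_le_left _ _) ?_)
  calc min 1 (c * s * z * ‖y‖ ^ (-((d : ℝ) + α)))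
      ≤ min (c * z * s ^ (-((d : ℝ) / α))) (c * s * z * ‖y‖ ^ (-((d : ℝ) + α))) :=
        min_le_min_right _ hczs
    _ = c * min (s ^ (-((d : ℝ) / α))) (s * ‖y‖ ^ (-((d : ℝ) + α))) * z := by
        rw [mul_min_of_nonneg _ _ hc0.le, min_mul_of_nonneg _ _ hz0.le]
        congr 1 <;> ring
    _ ≤ pker d α g s y * z := mul_le_mul_of_nonneg_right (mul_min_le_pker hα hc hs hy) hz0.le

end Kernel

noncomputable def truncatedMass (d : ℕ) (α : ℝ) (g : ℝ → ℝ) (t z : ℝ) : ℝ≥0∞ :=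
  ∫⁻ s in Ioc 0 t, ∫⁻ y, ENNReal.ofReal (min 1 (pker d α g s y * z))

section TruncatedMass

variable {d : ℕ} {α : ℝ} {g : ℝ → ℝ} {t : ℝ}

theorem truncatedMass_le_mul
    (hnorm : ∀ s : ℝ, 0 < s → ∫⁻ y, ENNReal.ofReal (pker d α g s y) = 1) {z : ℝ} (hz : 0 ≤ z) :
    truncatedMass d α g t z ≤ ENNReal.ofReal t * ENNReal.ofReal z := by
  calc truncatedMass d α g t z ≤ ∫⁻ _ in Ioc 0 t, ENNReal.ofReal z := by
        refine setLIntegral_mono' measurableSet_Ioc fun s hs => ?_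
        simpa [hnorm s hs.1] using lintegral_ofReal_min_one_mul_le volume (pker d α g s) hz
    _ = ENNReal.ofReal t * ENNReal.ofReal z := by
        rw [setLIntegral_const, Real.volume_Ioc, sub_zero, mul_comm]

theorem truncatedMass_le_mul_rpow [NeZero d] {C z : ℝ} (hα : 0 < α) (hC0 : 0 < C)
    (hC : ∀ r > 0, g r ≤ C * r ^ (-((d : ℝ) + α))) (ht : 0 ≤ t) (hz : 0 < z) :
    truncatedMass d α g t z ≤
      ENNReal.ofReal (t * (C * t) ^ ((d : ℝ) / (d + α))) *
        (∫⁻ y : EuclideanSpace ℝ (Fin d), ENNReal.ofReal (min 1 (‖y‖ ^ (-((d : ℝ) + α))))) *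
        ENNReal.ofReal (z ^ ((d : ℝ) / (d + α))) := by
  set β := (d : ℝ) / (d + α)
  set Φ := ∫⁻ y : EuclideanSpace ℝ (Fin d), ENNReal.ofReal (min 1 (‖y‖ ^ (-((d : ℝ) + α))))
  calc truncatedMass d α g t z ≤ ∫⁻ _ in Ioc 0 t, ENNReal.ofReal ((C * t * z) ^ β) * Φ := by
        refine setLIntegral_mono' measurableSet_Ioc fun s hs => ?_
        have hs0 : 0 < s := hs.1
        refine (lintegral_min_one_pker_mul_le_rpow hα hC0 hC hs0 hz).trans ?_
        gcongr
        exact hs.2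
    _ = ENNReal.ofReal (t * (C * t) ^ β) * Φ * ENNReal.ofReal (z ^ β) := by
        rw [setLIntegral_const, Real.volume_Ioc, sub_zero, Real.mul_rpow (by positivity) hz.le,
          ENNReal.ofReal_mul (by positivity), ENNReal.ofReal_mul ht]
        ring

theorem exists_mul_rpow_le_truncatedMass [NeZero d] {c : ℝ} (hα : 0 < α) (ht : 0 < t)
    (hc0 : 0 < c) (hc : ∀ r > 0, c * min 1 (r ^ (-((d : ℝ) + α))) ≤ g r) :
    ∃ a ≠ 0, ∀ z ≥ 1, a * ENNReal.ofReal (z ^ ((d : ℝ) / (d + α))) ≤ truncatedMass d α g t z := by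
  set β := (d : ℝ) / (d + α)
  set Φ := ∫⁻ y : EuclideanSpace ℝ (Fin d), ENNReal.ofReal (min 1 (‖y‖ ^ (-((d : ℝ) + α))))
  set s₀ := min t (c ^ (α / d))
  have hs₀ : 0 < s₀ := lt_min ht (by positivity)
  refine ⟨ENNReal.ofReal (s₀ / 2 * (c * (s₀ / 2)) ^ β) * Φ,
    mul_ne_zero (ENNReal.ofReal_pos.2 (by positivity)).ne'
      (lintegral_min_one_norm_rpow_neg_ne_zero volume _), fun z hz => ?_⟩
  have hz0 : 0 < z := one_pos.trans_le hz
  calc ENNReal.ofReal (s₀ / 2 * (c * (s₀ / 2)) ^ β) * Φ * ENNReal.ofReal (z ^ β)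
      = ∫⁻ _ in Ioc (s₀ / 2) s₀, ENNReal.ofReal ((c * (s₀ / 2) * z) ^ β) * Φ := by
        rw [setLIntegral_const, Real.volume_Ioc, sub_half, Real.mul_rpow (by positivity) hz0.le,
          ENNReal.ofReal_mul (by positivity), ENNReal.ofReal_mul (by positivity)]
        ring
    _ ≤ ∫⁻ s in Ioc (s₀ / 2) s₀, ∫⁻ y, ENNReal.ofReal (min 1 (pker d α g s y * z)) := by
        refine setLIntegral_mono' measurableSet_Ioc fun s hs => ?_
        have hs0 : 0 < s := (half_pos hs₀).trans hs.1
        refine le_trans ?_ (rpow_mul_le_lintegral_min_one_pker_mul hα hc0 hc hs0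
          (hs.2.trans (min_le_right _ _)) hz)
        gcongr
        exact hs.1.le
    _ ≤ truncatedMass d α g t z :=
        lintegral_mono_set fun s hs => ⟨(half_pos hs₀).trans hs.1, hs.2.trans (min_le_left _ _)⟩

theorem ofReal_mul_truncatedMass_one_le {z : ℝ} (hz0 : 0 ≤ z) (hz1 : z ≤ 1) :
    ENNReal.ofReal z * truncatedMass d α g t 1 ≤ truncatedMass d α g t z := by
  rw [truncatedMass, ← lintegral_const_mul' _ _ ENNReal.ofReal_ne_top]
  refine lintegral_mono fun s => ?_
  rw [← lintegral_const_mul' _ _ ENNReal.ofReal_ne_top]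
  refine lintegral_mono fun y => ?_
  rw [← ENNReal.ofReal_mul hz0, mul_one, mul_min_of_nonneg _ _ hz0, mul_one, mul_comm z]
  exact ENNReal.ofReal_le_ofReal (min_le_min_right _ hz1)

theorem lintegral_pker_eq_lintegral_truncatedMass (hg : AntitoneOn g (Ici 0)) (lam : Measure ℝ)
    [SFinite lam] :
    ∫⁻ s in Ioc 0 t, ∫⁻ y, ∫⁻ z in Ioi 0, ENNReal.ofReal (min 1 (pker d α g s y * z)) ∂lam =
      ∫⁻ z in Ioi 0, truncatedMass d α g t z ∂lam := by
  -- `g` need not be measurable, but `pker` only sees it on `[0, ∞)`, where it agrees with the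
  -- antitone, hence measurable, `G`.
  set G : ℝ → ℝ := fun r => g (max r 0)
  have hG : Measurable G := Antitone.measurable fun a b hab =>
    hg (mem_Ici.2 (le_max_right _ _)) (mem_Ici.2 (le_max_right _ _)) (max_le_max_right 0 hab)
  have hpG : ∀ s > 0, pker d α G s = pker d α g s := fun s hs => funext fun y => by
    simp only [pker, G, max_eq_left (by positivity : 0 ≤ ‖y‖ / s ^ (1 / α))]
  have hF : Measurable fun p : ℝ × EuclideanSpace ℝ (Fin d) × ℝ =>
      ENNReal.ofReal (min 1 (pker d α G p.1 p.2.1 * p.2.2)) := by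
    unfold pker
    fun_prop
  calc ∫⁻ s in Ioc 0 t, ∫⁻ y, ∫⁻ z in Ioi 0, ENNReal.ofReal (min 1 (pker d α g s y * z)) ∂lam
      = ∫⁻ s in Ioc 0 t, ∫⁻ y, ∫⁻ z in Ioi 0, ENNReal.ofReal (min 1 (pker d α G s y * z)) ∂lam :=
        setLIntegral_congr_fun measurableSet_Ioc fun s hs => by rw [hpG s hs.1]
    _ = ∫⁻ z in Ioi 0, (∫⁻ s in Ioc 0 t, ∫⁻ y, ENNReal.ofReal (min 1 (pker d α G s y * z))) ∂lam :=
        lintegral_lintegral_lintegral_swap hF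
    _ = ∫⁻ z in Ioi 0, truncatedMass d α g t z ∂lam :=
        lintegral_congr fun z => setLIntegral_congr_fun measurableSet_Ioc fun s hs => by
          rw [hpG s hs.1]

end TruncatedMass

theorem stmt18_general (d : ℕ) (hd : 1 ≤ d) (α : ℝ) (hα : α ∈ Set.Ioo (0:ℝ) 2) (t : ℝ) (ht : 0 < t)
    (lam : MeasureTheory.Measure ℝ) [SigmaFinite lam]
    (g : ℝ → ℝ)
    (hg_anti : StrictAntiOn g (Set.Ici 0)) (hg_pos : ∀ x : ℝ, 0 ≤ x → 0 < g x)
    (c₀ : ℝ) (hc₀ : 0 < c₀)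
    (hg_tail : Filter.Tendsto (fun r : ℝ => r ^ ((d:ℝ) + α) * g r) Filter.atTop (nhds c₀))
    (hnorm : ∀ s : ℝ, 0 < s →
      ∫⁻ y : EuclideanSpace ℝ (Fin d), ENNReal.ofReal (pker d α g s y) = 1) :
    (∫⁻ s in Set.Ioc (0:ℝ) t, ∫⁻ y : EuclideanSpace ℝ (Fin d), ∫⁻ z in Set.Ioi (0:ℝ),
        ENNReal.ofReal (min 1 (pker d α g s y * z)) ∂lam) < ⊤ ↔
      (∫⁻ z in Set.Ioc (0:ℝ) 1, ENNReal.ofReal z ∂lam < ⊤ ∧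
        ∫⁻ z in Set.Ioi (1:ℝ), ENNReal.ofReal (z ^ ((d:ℝ) / ((d:ℝ) + α))) ∂lam < ⊤) := by
  have : NeZero d := ⟨by omega⟩
  have hα0 : 0 < α := hα.1
  obtain ⟨C, hC0, hC⟩ := exists_le_mul_rpow_neg_of_tendsto hg_anti.antitoneOn
    (hg_pos 0 le_rfl) (by positivity) hg_tail
  obtain ⟨c, hc0, hc⟩ :=
    exists_mul_min_one_rpow_neg_le_of_tendsto hg_anti.antitoneOn hg_pos hc₀ hg_tail
  obtain ⟨a, ha0, ha⟩ := exists_mul_rpow_le_truncatedMass hα0 ht hc0 hc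
  have hΦ := lintegral_min_one_norm_rpow_neg_lt_top (E := EuclideanSpace ℝ (Fin d)) volume
    (γ := (d : ℝ) + α) (by rw [finrank_euclideanSpace_fin]; linarith)
  rw [lintegral_pker_eq_lintegral_truncatedMass hg_anti.antitoneOn,
    ← Ioc_union_Ioi_eq_Ioi zero_le_one,
    lintegral_union measurableSet_Ioi (Ioc_disjoint_Ioi le_rfl), ENNReal.add_lt_top]
  refine and_congr ?_ ?_
  · refine lintegral_lt_top_iff_of_le_of_le ha0 ENNReal.ofReal_ne_top
      (ae_restrict_of_forall_mem measurableSet_Ioc fun z hz => ?_)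
      (ae_restrict_of_forall_mem measurableSet_Ioc fun z hz => truncatedMass_le_mul hnorm hz.1.le)
    calc a * ENNReal.ofReal z ≤ ENNReal.ofReal z * truncatedMass d α g t 1 := by
          simpa [mul_comm a] using mul_le_mul_right (ha 1 le_rfl) (ENNReal.ofReal z)
      _ ≤ truncatedMass d α g t z := ofReal_mul_truncatedMass_one_le hz.1.le hz.2
  · refine lintegral_lt_top_iff_of_le_of_le ha0 ?_
      (ae_restrict_of_forall_mem measurableSet_Ioi fun z hz => ha z hz.le)
      (ae_restrict_of_forall_mem measurableSet_Ioi fun z hz =>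
        truncatedMass_le_mul_rpow hα0 hC0 hC ht.le (zero_lt_one.trans hz))
    exact ENNReal.mul_ne_top ENNReal.ofReal_ne_top hΦ.ne

theorem stmt18 (d : ℕ) (hd : 1 ≤ d) (α : ℝ) (hα : α ∈ Set.Ioo (0:ℝ) 2) (t : ℝ) (ht : 0 < t)
    (lam : MeasureTheory.Measure ℝ) [SigmaFinite lam]
    (hlam0 : lam (Set.Iic 0) = 0) (hlam_ne : lam ≠ 0)
    (hmom : ∫⁻ z in Set.Ioi (0:ℝ), ENNReal.ofReal (min 1 (z ^ 2)) ∂lam ≠ ⊤)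
    (g : ℝ → ℝ) (hg_cont : ContinuousOn g (Set.Ici 0))
    (hg_anti : StrictAntiOn g (Set.Ici 0)) (hg_pos : ∀ x : ℝ, 0 ≤ x → 0 < g x)
    (c₀ : ℝ) (hc₀ : 0 < c₀)
    (hg_tail : Filter.Tendsto (fun r : ℝ => r ^ ((d:ℝ) + α) * g r) Filter.atTop (nhds c₀))
    (hnorm : ∀ s : ℝ, 0 < s →
      ∫⁻ y : EuclideanSpace ℝ (Fin d), ENNReal.ofReal (pker d α g s y) = 1) :
    (∫⁻ s in Set.Ioc (0:ℝ) t, ∫⁻ y : EuclideanSpace ℝ (Fin d), ∫⁻ z in Set.Ioi (0:ℝ),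
        ENNReal.ofReal (min 1 (pker d α g s y * z)) ∂lam) < ⊤ ↔
      (∫⁻ z in Set.Ioc (0:ℝ) 1, ENNReal.ofReal z ∂lam < ⊤ ∧
        ∫⁻ z in Set.Ioi (1:ℝ), ENNReal.ofReal (z ^ ((d:ℝ) / ((d:ℝ) + α))) ∂lam < ⊤) :=
  stmt18_general d hd α hα t ht lam g hg_anti hg_pos c₀ hc₀ hg_tail hnorm
end
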